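/- arXiv:1912.03177 — 2 statements merged into one kernel-verified Lean document; each statement's English description precedes it below -/
import Mathlib

section
/- Let n ≥ 1, λ : Fin n → ℝ, ω : Fin n → ℝ, with grouped weight ω̄(x) = Σ_{j : λ j = x} ω j and support S = { x ∈ Set.range λ : ω̄(x) ≠ 0 }; let r = |S| and assume r ≥ 1. Define the measurements y k = Σ_i ω i * (λ i)^k. Then (a) the r×r Hankel matrix H_r with (H_r) s t = y (s + t) is invertible, and (b) defining the coefficient vector α = - H_r⁻¹ *ᵥ (y r, y (r+1), …, y (2r−1)), the monic polynomial X^r + Σ_{j=0}^{r-1} α_j X^j equals Π_{x ∈ S} (X − x); in particular, every element of S is a root of this polynomial. -/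
/-!
Grouping equal eigenvalues turns the measurements into the moments
`y k = ∑ x ∈ S, ω̄ x * x ^ k` of `r` distinct nodes with nonzero weights, so
`H_r = Vᵀ * diag ω̄ * V` with `V` the Vandermonde matrix of `S`, which is invertible.
If `p = ∏ x ∈ S, (X - x) = X ^ r + ∑ j < r, c j * X ^ j`, then
`∑ j < r, y (s + j) * c j + y (s + r) = ∑ x ∈ S, ω̄ x * x ^ s * p x = 0`,
i.e. `H_r c = -(y r, …, y (2r - 1))`, hence `α = c`.
-/

open Matrix Polynomial Finset

section GroupedWeight

variable {ι R : Type*} [Fintype ι] [CommRing R] [DecidableEq R]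

def groupedWeight (l ω : ι → R) (x : R) : R :=
  ∑ j ∈ univ.filter (fun j => l j = x), ω j

def spectralSupport (l ω : ι → R) : Finset R :=
  (univ.image l).filter (fun x => groupedWeight l ω x ≠ 0)

theorem sum_mul_eq_sum_spectralSupport (l ω : ι → R) (f : R → R) :
    ∑ i, ω i * f (l i) = ∑ x ∈ spectralSupport l ω, groupedWeight l ω x * f x := by
  rw [spectralSupport, sum_filter_of_ne fun x _ hx => left_ne_zero_of_mul hx]
  refine (sum_image' _ fun i _ => ?_).symm
  rw [groupedWeight, sum_mul]
  exact sum_congr rfl fun j hj => by rw [(mem_filter.mp hj).2]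

end GroupedWeight

section Hankel

variable {R : Type*} [CommRing R]

def hankel (y : ℕ → R) (r : ℕ) : Matrix (Fin r) (Fin r) R :=
  of fun s t => y (s + t)

def moment (S : Finset R) (w : R → R) (k : ℕ) : R :=
  ∑ x ∈ S, w x * x ^ k

theorem hankel_moment_eq_vandermonde {m : ℕ} (a c : Fin m → R) :
    hankel (fun k => ∑ u, c u * a u ^ k) m = (vandermonde a)ᵀ * diagonal c * vandermonde a := by
  ext s t
  simp only [hankel, of_apply, mul_apply, transpose_apply, vandermonde_apply, diagonal_apply,
    mul_ite, mul_zero, sum_ite_eq', mem_univ, if_true, pow_add]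
  exact sum_congr rfl fun u _ => by ring

theorem moment_eq_sum_equivFin (S : Finset R) (w : R → R) (k : ℕ) :
    moment S w k = ∑ u : Fin #S, w (S.equivFin.symm u) * (S.equivFin.symm u : R) ^ k := by
  rw [moment, ← sum_coe_sort S, ← S.equivFin.symm.sum_comp]

theorem sum_weight_mul_eval_eq_sum_moment (S : Finset R) (w : R → R) (q : R[X]) (s : ℕ) :
    ∑ x ∈ S, w x * x ^ s * q.eval x =
      ∑ j ∈ range (q.natDegree + 1), moment S w (s + j) * q.coeff j := by
  simp only [eval_eq_sum_range, moment, mul_sum, sum_mul]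
  rw [sum_comm]
  exact sum_congr rfl fun j _ => sum_congr rfl fun x _ => by ring

theorem hankel_mulVec_coeff_of_monic (S : Finset R) (w : R → R) {q : R[X]} {r : ℕ}
    (hq : q.Monic) (hdeg : q.natDegree = r) (hroot : ∀ x ∈ S, q.IsRoot x) :
    hankel (moment S w) r *ᵥ (fun j => q.coeff j) = -fun j : Fin r => moment S w (r + j) := by
  subst hdeg
  funext s
  have h := sum_weight_mul_eval_eq_sum_moment S w q s
  rw [sum_eq_zero fun x hx => by rw [hroot x hx, mul_zero], sum_range_succ, hq.coeff_natDegree,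
    mul_one, ← Fin.sum_univ_eq_sum_range (fun j => moment S w (s + j) * q.coeff j)] at h
  simp only [mulVec, dotProduct, hankel, of_apply, Pi.neg_apply]
  rw [add_comm q.natDegree]
  exact (neg_eq_of_add_eq_zero_left h.symm).symm

end Hankel

theorem isUnit_hankel_moment {K : Type*} [Field K] (S : Finset K) {w : K → K}
    (hw : ∀ x ∈ S, w x ≠ 0) :
    IsUnit (hankel (moment S w) #S) := by
  set a : Fin #S → K := fun u => S.equivFin.symm u
  have ha : Function.Injective a := Subtype.val_injective.comp S.equivFin.symm.injective
  rw [show moment S w = fun k => ∑ u, w (a u) * a u ^ k from funext (moment_eq_sum_equivFin S w),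
    hankel_moment_eq_vandermonde, isUnit_iff_isUnit_det, det_mul, det_mul, det_transpose,
    det_diagonal, isUnit_iff_ne_zero]
  have hV : (vandermonde a).det ≠ 0 := det_vandermonde_ne_zero_iff.mpr ha
  have hD : ∏ u, w (a u) ≠ 0 := prod_ne_zero_iff.mpr fun u _ => hw _ (S.equivFin.symm u).2
  exact mul_ne_zero (mul_ne_zero hV hD) hV

theorem laplacian_eigenvalue_recovery_general (n : ℕ) (l ω : Fin n → ℝ)
    (y : ℕ → ℝ) (hy : ∀ k, y k = ∑ i : Fin n, ω i * l i ^ k)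
    (S : Finset ℝ)
    (hS : S = (Finset.univ.image l).filter
        (fun x => ∑ j ∈ Finset.univ.filter (fun j => l j = x), ω j ≠ 0))
    (r : ℕ) (hr : r = S.card)
    (Hr : Matrix (Fin r) (Fin r) ℝ)
    (hHr : Hr = Matrix.of fun s t : Fin r => y ((s : ℕ) + (t : ℕ)))
    (α : Fin r → ℝ) (hα : α = -(Hr⁻¹ *ᵥ fun j : Fin r => y (r + (j : ℕ)))) :
    IsUnit Hr ∧
      (Polynomial.X ^ r + ∑ j : Fin r, Polynomial.C (α j) * Polynomial.X ^ (j : ℕ)) =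
        ∏ x ∈ S, (Polynomial.X - Polynomial.C x) ∧
      ∀ x ∈ S,
        (Polynomial.X ^ r + ∑ j : Fin r, Polynomial.C (α j) * Polynomial.X ^ (j : ℕ)).IsRoot
          x := by
  replace hS : S = spectralSupport l ω := hS
  replace hy : y = moment S (groupedWeight l ω) := funext fun k => by
    rw [hy, hS, moment, ← sum_mul_eq_sum_spectralSupport l ω (· ^ k)]
  replace hHr : Hr = hankel y r := hHr
  subst hy hHr hα
  set p : ℝ[X] := ∏ x ∈ S, (X - C x)
  have hp_monic : p.Monic := monic_prod_of_monic _ _ fun x _ => monic_X_sub_C x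
  have hp_deg : p.natDegree = r := by rw [hr]; exact natDegree_finsetProd_X_sub_C_eq_card S id
  have hp_root : ∀ x ∈ S, p.IsRoot x := fun x hx => by
    rw [IsRoot, eval_prod]
    exact prod_eq_zero hx (by simp)
  have hunit : IsUnit (hankel (moment S (groupedWeight l ω)) r) := by
    subst hr
    refine isUnit_hankel_moment S fun x hx => ?_
    rw [hS, spectralSupport, mem_filter] at hx
    exact hx.2
  have hα : -((hankel (moment S (groupedWeight l ω)) r)⁻¹ *ᵥ
      fun j : Fin r => moment S (groupedWeight l ω) (r + j)) = fun j : Fin r => p.coeff j := by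
    rw [← mulVec_neg, ← hankel_mulVec_coeff_of_monic S _ hp_monic hp_deg hp_root, mulVec_mulVec,
      nonsing_inv_mul _ ((isUnit_iff_isUnit_det _).mp hunit), one_mulVec]
  have hpoly : X ^ r + ∑ j : Fin r, C (p.coeff j) * X ^ (j : ℕ) = p := by
    rw [Fin.sum_univ_eq_sum_range (fun j => C (p.coeff j) * X ^ j), ← hp_deg]
    exact hp_monic.as_sum.symm
  rw [hα]
  exact ⟨hunit, hpoly, by rwa [hpoly]⟩

/-- **Theorem 1.** From the measurements `y[k] = Σ_i ω_i λ_i^k`, with `r` the cardinality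
of the support `S` of the spectral measure, the `r × r` Hankel matrix of measurements is
invertible, and the monic polynomial whose lower coefficients are
`α = -H_r⁻¹ (y_r, …, y_{2r-1})` equals `Π_{x ∈ S} (X - x)`; in particular every
element of `S` is a root of it. -/
theorem laplacian_eigenvalue_recovery (n : ℕ) (hn : 1 ≤ n) (l ω : Fin n → ℝ)
    (y : ℕ → ℝ) (hy : ∀ k, y k = ∑ i : Fin n, ω i * l i ^ k)
    (S : Finset ℝ)
    (hS : S = (Finset.univ.image l).filter
        (fun x => ∑ j ∈ Finset.univ.filter (fun j => l j = x), ω j ≠ 0))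
    (r : ℕ) (hr : r = S.card) (hr1 : 1 ≤ r)
    (Hr : Matrix (Fin r) (Fin r) ℝ)
    (hHr : Hr = Matrix.of fun s t : Fin r => y ((s : ℕ) + (t : ℕ)))
    (α : Fin r → ℝ) (hα : α = -(Hr⁻¹ *ᵥ fun j : Fin r => y (r + (j : ℕ)))) :
    IsUnit Hr ∧
      (Polynomial.X ^ r + ∑ j : Fin r, Polynomial.C (α j) * Polynomial.X ^ (j : ℕ)) =
        ∏ x ∈ S, (Polynomial.X - Polynomial.C x) ∧
      ∀ x ∈ S,
        (Polynomial.X ^ r + ∑ j : Fin r, Polynomial.C (α j) * Polynomial.X ^ (j : ℕ)).IsRoot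
          x :=
  laplacian_eigenvalue_recovery_general n l ω y hy S hS r hr Hr hHr α hα
end

section
/- Let n, d ≥ 1, let U be an invertible n×n real matrix, λ : Fin n → ℝ, L = U (Matrix.diagonal λ) U⁻¹, and let A be a d×d real matrix. Let c, x₀ ∈ ℝⁿ, γ, β ∈ ℝᵈ with γᵀ β ≠ 0, and define the observations y k = (c ⊗ γ)ᵀ *ᵥ ((I_n ⊗ A + L ⊗ I_d)^k *ᵥ (x₀ ⊗ β)) and the moments m k = Σ_i ω i * (λ i)^k with ω i = (Uᵀ c) i * (U⁻¹ *ᵥ x₀) i. Then for every N ≥ 1, the moment vector (m 0, …, m (N−1)) is the unique solution of the lower-triangular linear system T *ᵥ m = y, where T k s = (k choose s) * (γᵀ A^{k−s} β) for s ≤ k and T k s = 0 otherwise. -/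
/-!
Since `1 ⊗ A` and `L ⊗ 1` commute, the binomial theorem expands `(1 ⊗ A + L ⊗ 1) ^ k` as
`∑ C(k, s) • L ^ s ⊗ A ^ (k - s)`. On Kronecker vectors each term factors as
`(cᵀ L ^ s x₀) (γᵀ A ^ (k - s) β)`, and diagonalising `L` identifies `cᵀ L ^ s x₀` with the
moment `m s`. The resulting system is lower triangular with diagonal `γᵀ β ≠ 0`, so its
solution is unique.
-/

open Matrix Finset
open scoped Kronecker

/-- Kronecker product of two vectors. -/
def vecKron {n d : ℕ} (x : Fin n → ℝ) (y : Fin d → ℝ) : Fin n × Fin d → ℝ :=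
  fun p => x p.1 * y p.2

namespace Matrix

variable {α m n : Type*} [Fintype m] [Fintype n]

theorem kronecker_pow [DecidableEq m] [DecidableEq n] [CommSemiring α] (M : Matrix m m α)
    (P : Matrix n n α) (k : ℕ) :
    (M ⊗ₖ P) ^ k = (M ^ k) ⊗ₖ (P ^ k) := by
  induction k with
  | zero => simp
  | succ k ih => rw [pow_succ, pow_succ, pow_succ, ih, mul_kronecker_mul]

theorem commute_kronecker_one_one_kronecker [DecidableEq m] [DecidableEq n] [CommSemiring α]
    (M : Matrix m m α) (P : Matrix n n α) :
    Commute (M ⊗ₖ (1 : Matrix n n α)) ((1 : Matrix m m α) ⊗ₖ P) := by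
  simp only [Commute, SemiconjBy, ← mul_kronecker_mul, Matrix.one_mul, Matrix.mul_one]

theorem one_kronecker_add_kronecker_one_pow [DecidableEq m] [DecidableEq n] [CommSemiring α]
    (P : Matrix n n α) (M : Matrix m m α) (k : ℕ) :
    ((1 : Matrix m m α) ⊗ₖ P + M ⊗ₖ (1 : Matrix n n α)) ^ k =
      ∑ s ∈ range (k + 1), k.choose s • ((M ^ s) ⊗ₖ (P ^ (k - s))) := by
  rw [add_comm, (commute_kronecker_one_one_kronecker M P).add_pow]
  refine sum_congr rfl fun s _ => ?_
  rw [kronecker_pow, kronecker_pow, one_pow, one_pow, ← mul_kronecker_mul, Matrix.mul_one,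
    Matrix.one_mul, nsmul_eq_mul']

theorem dotProduct_mulVec_conj_diagonal [DecidableEq m] [CommSemiring α] (U : Matrix n m α)
    (l : m → α) (V : Matrix m n α) (c x : n → α) :
    c ⬝ᵥ ((U * diagonal l * V) *ᵥ x) = ∑ i, (Uᵀ *ᵥ c) i * (V *ᵥ x) i * l i := by
  rw [← mulVec_mulVec, ← mulVec_mulVec, dotProduct_mulVec, mulVec_transpose]
  simp only [dotProduct, mulVec_diagonal]
  exact sum_congr rfl fun i _ => by ring

theorem conj_diagonal_pow [DecidableEq n] [CommRing α] {U : Matrix n n α} (hU : IsUnit U)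
    (l : n → α) (k : ℕ) :
    (U * diagonal l * U⁻¹) ^ k = U * diagonal (l ^ k) * U⁻¹ := by
  obtain ⟨u, rfl⟩ := hU
  rw [← coe_units_inv, Units.conj_pow, diagonal_pow]

theorem mulVec_injective_of_isLowerTriangular {K : Type*} [Field K] [LinearOrder m]
    {T : Matrix m m K} (hT : T.IsLowerTriangular) (hdiag : ∀ i, T i i ≠ 0) :
    Function.Injective T.mulVec := by
  rw [mulVec_injective_iff_isUnit, isUnit_iff_isUnit_det, det_of_isLowerTriangular T hT,
    isUnit_iff_ne_zero]
  exact prod_ne_zero_iff.2 fun i _ => hdiag i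

end Matrix

theorem Fin.sum_ite_le_eq_sum_range {M : Type*} [AddCommMonoid M] {N : ℕ} (k : Fin N)
    (g : ℕ → M) :
    ∑ s : Fin N, (if (s : ℕ) ≤ k then g s else 0) = ∑ s ∈ range (k + 1), g s := by
  rw [Fin.sum_univ_eq_sum_range (fun s => if s ≤ (k : ℕ) then g s else 0), ← sum_filter]
  congr 1
  ext s
  simp only [mem_filter, mem_range]
  omega

theorem kronecker_mulVec_vecKron {n n' d d' : ℕ} (M : Matrix (Fin n) (Fin n') ℝ)
    (P : Matrix (Fin d) (Fin d') ℝ) (u : Fin n' → ℝ) (v : Fin d' → ℝ) :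
    (M ⊗ₖ P) *ᵥ vecKron u v = vecKron (M *ᵥ u) (P *ᵥ v) := by
  funext ⟨i, j⟩
  simp only [mulVec, dotProduct, vecKron, kroneckerMap_apply, Fintype.sum_prod_type, sum_mul_sum]
  exact sum_congr rfl fun _ _ => sum_congr rfl fun _ _ => by ring

theorem vecKron_dotProduct_vecKron {n d : ℕ} (a u : Fin n → ℝ) (b v : Fin d → ℝ) :
    vecKron a b ⬝ᵥ vecKron u v = (a ⬝ᵥ u) * (b ⬝ᵥ v) := by
  simp only [dotProduct, vecKron, Fintype.sum_prod_type, sum_mul_sum]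
  exact sum_congr rfl fun _ _ => sum_congr rfl fun _ _ => by ring

theorem multiagent_moment_recovery_general (n d : ℕ)
    (U : Matrix (Fin n) (Fin n) ℝ) (hU : IsUnit U) (l : Fin n → ℝ)
    (L : Matrix (Fin n) (Fin n) ℝ) (hL : L = U * Matrix.diagonal l * U⁻¹)
    (A : Matrix (Fin d) (Fin d) ℝ)
    (c x₀ : Fin n → ℝ) (γ β : Fin d → ℝ) (hγβ : γ ⬝ᵥ β ≠ 0)
    (y : ℕ → ℝ)
    (hy : ∀ k, y k = vecKron c γ ⬝ᵥ
      (((1 : Matrix (Fin n) (Fin n) ℝ) ⊗ₖ A + L ⊗ₖ (1 : Matrix (Fin d) (Fin d) ℝ)) ^ k *ᵥ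
        vecKron x₀ β))
    (ω : Fin n → ℝ) (hω : ω = fun i => (Uᵀ *ᵥ c) i * (U⁻¹ *ᵥ x₀) i)
    (m : ℕ → ℝ) (hm : ∀ k, m k = ∑ i : Fin n, ω i * l i ^ k)
    (N : ℕ)
    (T : Matrix (Fin N) (Fin N) ℝ)
    (hT : T = Matrix.of fun k s : Fin N =>
      if (s : ℕ) ≤ (k : ℕ) then
        ((k : ℕ).choose (s : ℕ) : ℝ) * (γ ⬝ᵥ (A ^ ((k : ℕ) - (s : ℕ)) *ᵥ β))
      else 0) :
    T *ᵥ (fun k : Fin N => m (k : ℕ)) = (fun k : Fin N => y (k : ℕ)) ∧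
      ∀ m' : Fin N → ℝ,
        T *ᵥ m' = (fun k : Fin N => y (k : ℕ)) → m' = fun k : Fin N => m (k : ℕ) := by
  subst hL hω
  have hmoment (s : ℕ) : c ⬝ᵥ ((U * diagonal l * U⁻¹) ^ s *ᵥ x₀) = m s := by
    rw [conj_diagonal_pow hU, dotProduct_mulVec_conj_diagonal, hm]
    rfl
  have hexpand (k : ℕ) :
      y k = ∑ s ∈ range (k + 1), (k.choose s : ℝ) * (γ ⬝ᵥ (A ^ (k - s) *ᵥ β)) * m s := by
    rw [hy, one_kronecker_add_kronecker_one_pow, sum_mulVec, dotProduct_sum]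
    refine sum_congr rfl fun s _ => ?_
    rw [smul_mulVec, dotProduct_smul, kronecker_mulVec_vecKron, vecKron_dotProduct_vecKron,
      hmoment, nsmul_eq_mul]
    ring
  have hsolution : T *ᵥ (fun k : Fin N => m k) = fun k : Fin N => y k := by
    funext k
    rw [hT, mulVec, dotProduct]
    simp only [of_apply, ite_mul, zero_mul]
    rw [hexpand, ← Fin.sum_ite_le_eq_sum_range]
  refine ⟨hsolution, fun m' hm' => mulVec_injective_of_isLowerTriangular ?_ ?_
    (hm'.trans hsolution.symm)⟩
  · intro i j hij
    rw [hT, of_apply, if_neg (not_le.2 hij : ¬ (j : ℕ) ≤ i)]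
  · intro i
    simpa [hT] using hγβ

/-- **Theorem 2.** For the networked dynamics of `n` identical agents with dynamics matrix
`A` coupled through the diagonalizable Laplacian `L = U Λ U⁻¹`, with `γᵀ β ≠ 0`, the
moment vector `(m_0, …, m_{N-1})` of the spectral measure is the unique solution of the
lower-triangular linear system `T m = y` built from the observations. -/
theorem multiagent_moment_recovery (n d : ℕ) (hn : 1 ≤ n) (hd : 1 ≤ d)
    (U : Matrix (Fin n) (Fin n) ℝ) (hU : IsUnit U) (l : Fin n → ℝ)
    (L : Matrix (Fin n) (Fin n) ℝ) (hL : L = U * Matrix.diagonal l * U⁻¹)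
    (A : Matrix (Fin d) (Fin d) ℝ)
    (c x₀ : Fin n → ℝ) (γ β : Fin d → ℝ) (hγβ : γ ⬝ᵥ β ≠ 0)
    (y : ℕ → ℝ)
    (hy : ∀ k, y k = vecKron c γ ⬝ᵥ
      (((1 : Matrix (Fin n) (Fin n) ℝ) ⊗ₖ A + L ⊗ₖ (1 : Matrix (Fin d) (Fin d) ℝ)) ^ k *ᵥ
        vecKron x₀ β))
    (ω : Fin n → ℝ) (hω : ω = fun i => (Uᵀ *ᵥ c) i * (U⁻¹ *ᵥ x₀) i)
    (m : ℕ → ℝ) (hm : ∀ k, m k = ∑ i : Fin n, ω i * l i ^ k)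
    (N : ℕ) (hN : 1 ≤ N)
    (T : Matrix (Fin N) (Fin N) ℝ)
    (hT : T = Matrix.of fun k s : Fin N =>
      if (s : ℕ) ≤ (k : ℕ) then
        ((k : ℕ).choose (s : ℕ) : ℝ) * (γ ⬝ᵥ (A ^ ((k : ℕ) - (s : ℕ)) *ᵥ β))
      else 0) :
    T *ᵥ (fun k : Fin N => m (k : ℕ)) = (fun k : Fin N => y (k : ℕ)) ∧
      ∀ m' : Fin N → ℝ,
        T *ᵥ m' = (fun k : Fin N => y (k : ℕ)) → m' = fun k : Fin N => m (k : ℕ) :=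
  multiagent_moment_recovery_general n d U hU l L hL A c x₀ γ β hγβ y hy ω hω m hm N T hT
end
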